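/- arXiv:1907.10930 — 2 statements merged into one kernel-verified Lean document; each statement's English description precedes it below -/
import Mathlib

section
/- Let n ≥ 1 and let x : Fin n → ℤ satisfy ∑_m x m = 0. Then there exist M ∈ ℕ and a list of ordered pairs (i_1,j_1),…,(i_M,j_M) of indices in Fin n with i_t ≠ j_t for all t, such that x = ∑_{t=1}^M (e_{i_t} − e_{j_t}), and the decomposition is without cancellation: for every coordinate m, ∑_{t=1}^M |(e_{i_t} − e_{j_t}) m| = |x m|. Moreover 2·M = ∑_m |x m|. -/
/-- The standard unit vector `e i : Fin n → ℤ`, with `1` in coordinate `i` and `0` elsewhere. -/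
def e {n : ℕ} (i : Fin n) : Fin n → ℤ := fun m => if m = i then 1 else 0

lemma sum_e {n : ℕ} (i : Fin n) : ∑ m, e i m = 1 := by
  simp [e]

lemma graver_aux (n : ℕ) : ∀ (k : ℕ) (x : Fin n → ℤ), ∑ m, x m = 0 →
    (∑ m, |x m|) ≤ 2 * k →
    ∃ (M : ℕ) (L : List (Fin n × Fin n)),
      L.length = M ∧
      (∀ p ∈ L, p.1 ≠ p.2) ∧
      x = (L.map (fun p => e p.1 - e p.2)).sum ∧
      (∀ m, (L.map (fun p => |(e p.1 - e p.2) m|)).sum = |x m|) ∧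
      (2 * M : ℤ) = ∑ m, |x m| := by
  intro k
  induction k with
  | zero =>
    intro x hx hk
    have h0 : ∀ m ∈ Finset.univ, |x m| = 0 := by
      rw [← Finset.sum_eq_zero_iff_of_nonneg (fun m _ => abs_nonneg (x m))]
      have : 0 ≤ ∑ m, |x m| := Finset.sum_nonneg (fun m _ => abs_nonneg (x m))
      omega
    refine ⟨0, [], rfl, by simp, ?_, ?_, ?_⟩
    · funext m
      have := h0 m (Finset.mem_univ m)
      simpa [abs_eq_zero] using this
    · intro m
      have := h0 m (Finset.mem_univ m)
      simp [this]
    · rw [Finset.sum_congr rfl h0]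
      simp
  | succ k ih =>
    intro x hx hk
    by_cases hx0 : x = 0
    · subst hx0
      exact ⟨0, [], rfl, by simp, by simp, by simp, by simp⟩
    · obtain ⟨i, hi⟩ : ∃ i, 0 < x i := by
        by_contra h
        push_neg at h
        apply hx0
        funext m
        have hs : ∑ m, -x m = 0 := by simp [hx]
        have := (Finset.sum_eq_zero_iff_of_nonneg
          (fun m _ => by linarith [h m] : ∀ m ∈ Finset.univ, 0 ≤ -x m)).1 hs m
          (Finset.mem_univ m)
        simpa using by linarith [this]
      obtain ⟨j, hj⟩ : ∃ j, x j < 0 := by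
        by_contra h
        push_neg at h
        apply hx0
        funext m
        exact (Finset.sum_eq_zero_iff_of_nonneg
          (fun m _ => h m)).1 hx m (Finset.mem_univ m)
      have hij : i ≠ j := by rintro rfl; omega
      set x' : Fin n → ℤ := x - (e i - e j) with hx'def
      have hsum' : ∑ m, x' m = 0 := by
        simp [hx'def, Finset.sum_sub_distrib, hx, sum_e]
      have habs : ∀ m, |x m| = |(e i - e j) m| + |x' m| := by
        intro m
        by_cases hmi : m = i
        · subst hmi
          have h1 : (e m - e j) m = 1 := by simp [e, hij]
          have h2 : x' m = x m - 1 := by simp [hx'def, h1]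
          rw [h1, h2, abs_one, abs_of_pos hi,
            abs_of_nonneg (show (0:ℤ) ≤ x m - 1 by omega)]
          ring
        · by_cases hmj : m = j
          · subst hmj
            have h1 : (e i - e m) m = -1 := by simp [e, hmi]
            have h2 : x' m = x m + 1 := by simp [hx'def, h1]
            rw [h1, h2, abs_neg, abs_one, abs_of_neg hj,
              abs_of_nonpos (show x m + 1 ≤ 0 by omega)]
            ring
          · have h1 : (e i - e j) m = 0 := by simp [e, hmi, hmj]
            have h2 : x' m = x m := by simp [hx'def, h1]
            rw [h1, h2]
            simp
      have hE : ∑ m, |(e i - e j) m| = 2 := by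
        have h : ∀ m ∈ Finset.univ, |(e i - e j) m| = e i m + e j m := by
          intro m _
          by_cases hmi : m = i
          · subst hmi; simp [e, hij]
          · by_cases hmj : m = j
            · subst hmj; simp [e, hmi]
            · simp [e, hmi, hmj]
        rw [Finset.sum_congr rfl h, Finset.sum_add_distrib, sum_e, sum_e]
        norm_num
      have hnorm : ∑ m, |x' m| = (∑ m, |x m|) - 2 := by
        have : ∑ m, |x m| = (∑ m, |(e i - e j) m|) + ∑ m, |x' m| := by
          rw [← Finset.sum_add_distrib]
          exact Finset.sum_congr rfl (fun m _ => habs m)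
        omega
      obtain ⟨M, L, hlen, hne, hsum, hcanc, hM⟩ := ih x' hsum' (by omega)
      refine ⟨M + 1, (i, j) :: L, by simp [hlen], ?_, ?_, ?_, ?_⟩
      · rintro p hp
        rcases List.mem_cons.1 hp with rfl | hp
        · exact hij
        · exact hne p hp
      · rw [List.map_cons, List.sum_cons, ← hsum]
        funext m
        simp [hx'def]
      · intro m
        rw [List.map_cons, List.sum_cons, hcanc m, ← habs m]
      · push_cast
        linarith [hM, hnorm]
    

/-- Every integer vector with coordinate sum zero is a cancellation-free sum of
Graver basis elements `e i − e j` of the all-ones row matrix, and the number `M` of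
summands satisfies `2 M = ∑ |x m|`. -/
theorem graver_decomposition_ones_row (n : ℕ) (hn : 1 ≤ n) (x : Fin n → ℤ)
    (hx : ∑ m, x m = 0) :
    ∃ (M : ℕ) (L : List (Fin n × Fin n)),
      L.length = M ∧
      (∀ p ∈ L, p.1 ≠ p.2) ∧
      x = (L.map (fun p => e p.1 - e p.2)).sum ∧
      (∀ m, (L.map (fun p => |(e p.1 - e p.2) m|)).sum = |x m|) ∧
      (2 * M : ℤ) = ∑ m, |x m| := by
  apply graver_aux n (∑ m, |x m|).toNat x hx
  have h : 0 ≤ ∑ m, |x m| := Finset.sum_nonneg (fun m _ => abs_nonneg (x m))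
  omega
end

section
/- Let k, n ≥ 2, let i ≠ j in Fin k and s ≠ t in Fin n, and let G : Fin k → Fin n → ℤ be the matrix with G i s = 1, G j t = 1, G i t = −1, G j s = −1, and all other entries 0. Then all row sums and all column sums of G are zero, and G is conformally minimal in the set of integer k×n matrices with all row sums and column sums zero: the only nonzero matrix W with all row and column sums zero satisfying W ⊑ G is G itself. -/
/-- `U` is conformal to `V` (`U ⊑ V`) for matrices: entrywise non-opposite signs and
`|U p q| ≤ |V p q|`. -/
def IsConformalTo {k n : ℕ} (U V : Fin k → Fin n → ℤ) : Prop :=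
  ∀ p q, 0 ≤ U p q * V p q ∧ |U p q| ≤ |V p q|

lemma sum_pair_aux {m : ℕ} (f : Fin m → ℤ) (a b : Fin m) (hab : a ≠ b)
    (h : ∀ q, q ≠ a → q ≠ b → f q = 0) : ∑ q, f q = f a + f b := by
  rw [← Finset.sum_subset (Finset.subset_univ {a, b})
    (fun x _ hx => h x (fun h1 => hx (by simp [h1])) (fun h2 => hx (by simp [h2])))]
  exact Finset.sum_pair hab

/-- A 2×2 swap matrix `G` (with `+1` at `(i,s)`, `(j,t)`, `−1` at `(i,t)`, `(j,s)`, and `0`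
elsewhere) has all row and column sums zero, and is conformally minimal among the nonzero
integer matrices with all row and column sums zero. -/
theorem swap_matrix_conformally_minimal (k n : ℕ) (hk : 2 ≤ k) (hn : 2 ≤ n)
    (i j : Fin k) (hij : i ≠ j) (s t : Fin n) (hst : s ≠ t)
    (G : Fin k → Fin n → ℤ)
    (hGis : G i s = 1) (hGjt : G j t = 1) (hGit : G i t = -1) (hGjs : G j s = -1)
    (hG0 : ∀ p q, (p, q) ≠ (i, s) → (p, q) ≠ (j, t) → (p, q) ≠ (i, t) → (p, q) ≠ (j, s) →
      G p q = 0) :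
    (∀ p, ∑ q, G p q = 0) ∧ (∀ q, ∑ p, G p q = 0) ∧
      ∀ W : Fin k → Fin n → ℤ, (∀ p, ∑ q, W p q = 0) → (∀ q, ∑ p, W p q = 0) →
        W ≠ 0 → IsConformalTo W G → W = G := by
  have key : ∀ (H : Fin k → Fin n → ℤ),
      (∀ p q, (p, q) ≠ (i, s) → (p, q) ≠ (j, t) → (p, q) ≠ (i, t) → (p, q) ≠ (j, s) →
        H p q = 0) →
      (∀ p, ∑ q, H p q = H p s + H p t) ∧ (∀ q, ∑ p, H p q = H i q + H j q) := by
    intro H hH0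
    constructor
    · intro p
      apply sum_pair_aux _ _ _ hst
      intro q hqs hqt
      exact hH0 p q (by simp [hqs]) (by simp [hqt]) (by simp [hqt]) (by simp [hqs])
    · intro q
      apply sum_pair_aux _ _ _ hij
      intro p hpi hpj
      exact hH0 p q (by simp [hpi]) (by simp [hpj]) (by simp [hpi]) (by simp [hpj])
  obtain ⟨hGrow, hGcol⟩ := key G hG0
  have hzi : ∀ p, p ≠ i → p ≠ j → G p s = 0 ∧ G p t = 0 := fun p hpi hpj =>
    ⟨hG0 p s (by simp [hpi]) (by simp [hpj]) (by simp [hpi]) (by simp [hpj]),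
     hG0 p t (by simp [hpi]) (by simp [hpj]) (by simp [hpi]) (by simp [hpj])⟩
  have hzq : ∀ q, q ≠ s → q ≠ t → G i q = 0 ∧ G j q = 0 := fun q hqs hqt =>
    ⟨hG0 i q (by simp [hqs]) (by simp [hij, hqt]) (by simp [hqt]) (by simp [hij]),
     hG0 j q (by simp [hij.symm]) (by simp [hqt]) (by simp [hij.symm]) (by simp [hqs])⟩
  refine ⟨?_, ?_, ?_⟩
  · intro p
    rw [hGrow p]
    by_cases hpi : p = i
    · subst hpi; rw [hGis, hGit]; ring
    by_cases hpj : p = j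
    · subst hpj; rw [hGjt, hGjs]; ring
    · rw [(hzi p hpi hpj).1, (hzi p hpi hpj).2]; ring
  · intro q
    rw [hGcol q]
    by_cases hqs : q = s
    · subst hqs; rw [hGis, hGjs]; ring
    by_cases hqt : q = t
    · subst hqt; rw [hGit, hGjt]; ring
    · rw [(hzq q hqs hqt).1, (hzq q hqs hqt).2]; ring
  · intro W hWr hWc hW0 hconf
    have hWz : ∀ p q, (p, q) ≠ (i, s) → (p, q) ≠ (j, t) → (p, q) ≠ (i, t) → (p, q) ≠ (j, s) →
        W p q = 0 := by
      intro p q h1 h2 h3 h4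
      have h := (hconf p q).2
      rw [hG0 p q h1 h2 h3 h4] at h
      simpa using h
    obtain ⟨hWrow, hWcol⟩ := key W hWz
    have e1 : W i s + W i t = 0 := by rw [← hWrow i]; exact hWr i
    have e2 : W j s + W j t = 0 := by rw [← hWrow j]; exact hWr j
    have e3 : W i s + W j s = 0 := by rw [← hWcol s]; exact hWc s
    have his := hconf i s
    rw [hGis] at his
    have ha : W i s = 1 := by
      obtain ⟨h1, h2⟩ := his
      rw [mul_one] at h1
      rw [abs_one, abs_le] at h2
      have hne : W i s ≠ 0 := by
        intro h0
        apply hW0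
        funext p q
        by_cases h1' : (p, q) = (i, s)
        · obtain ⟨rfl, rfl⟩ := Prod.mk.injEq .. ▸ h1'
          simp only [Pi.zero_apply]; omega
        by_cases h2' : (p, q) = (j, t)
        · obtain ⟨rfl, rfl⟩ := Prod.mk.injEq .. ▸ h2'
          simp only [Pi.zero_apply]; omega
        by_cases h3' : (p, q) = (i, t)
        · obtain ⟨rfl, rfl⟩ := Prod.mk.injEq .. ▸ h3'
          simp only [Pi.zero_apply]; omega
        by_cases h4' : (p, q) = (j, s)
        · obtain ⟨rfl, rfl⟩ := Prod.mk.injEq .. ▸ h4'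
          simp only [Pi.zero_apply]; omega
        · exact hWz p q h1' h2' h3' h4'
      omega
    funext p q
    by_cases h1' : (p, q) = (i, s)
    · obtain ⟨rfl, rfl⟩ := Prod.mk.injEq .. ▸ h1'
      rw [ha, hGis]
    by_cases h2' : (p, q) = (j, t)
    · obtain ⟨rfl, rfl⟩ := Prod.mk.injEq .. ▸ h2'
      rw [hGjt]; omega
    by_cases h3' : (p, q) = (i, t)
    · obtain ⟨rfl, rfl⟩ := Prod.mk.injEq .. ▸ h3'
      rw [hGit]; omega
    by_cases h4' : (p, q) = (j, s)
    · obtain ⟨rfl, rfl⟩ := Prod.mk.injEq .. ▸ h4'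
      rw [hGjs]; omega
    · rw [hWz p q h1' h2' h3' h4', hG0 p q h1' h2' h3' h4']
end
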